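/- For all positive integers m and s there exists t such that the following holds. Let H be a 3-graph and let G be a copy of K_{t,t} contained in the shadow ∂H, and suppose G has an m-multicoloring (with respect to H). Then there exists a copy F of K_{s,s} contained in G such that F has either a rainbow list-edge-coloring, or an m-multicoloring χ_1, …, χ_m that are pairwise disjoint (χ_i(e) ≠ χ_j(f) for all edges e, f of F and i ≠ j) and such that each χ_i is monochromatic or canonical on F. -/
import Mathlib

open Finset

section RamseyAux

theorem ramseyT (α : Type) [Fintype α] [DecidableEq α] (k : ℕ) : ∀ (n : ℕ),
    ∃ t : ℕ, ∀ (f : (Fin k → ℕ) → α) (Y : Finset ℕ), t ≤ Y.card →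
      ∃ Z ⊆ Y, Z.card = n ∧ ∃ b : α, ∀ v : Fin k → ℕ,
        StrictMono v → (∀ l, v l ∈ Z) → f v = b := by
  induction k with
  | zero =>
    intro n
    refine ⟨n, fun f Y hY => ?_⟩
    obtain ⟨Z, hZY, hZ⟩ := Y.exists_subset_card_eq hY
    refine ⟨Z, hZY, hZ, f (fun i => i.elim0), fun v _ _ => ?_⟩
    congr 1; funext i; exact i.elim0
  | succ k ih =>
    choose T hT using ih
    have EH : ∀ M : ℕ, ∃ t : ℕ, ∀ (f : (Fin (k+1) → ℕ) → α) (Y : Finset ℕ), t ≤ Y.card →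
        ∃ Z ⊆ Y, Z.card = M ∧ ∃ c : ℕ → α, ∀ v : Fin (k+1) → ℕ,
          StrictMono v → (∀ l, v l ∈ Z) → f v = c (v 0) := by
      intro M
      induction M with
      | zero =>
        refine ⟨0, fun f Y _ => ⟨∅, empty_subset _, card_empty, fun _ => f (fun _ => 0),
          fun v _ hvZ => absurd (hvZ 0) (by simp)⟩⟩
      | succ M ihM =>
        obtain ⟨tM, hM⟩ := ihM
        refine ⟨T tM + 1, fun f Y hY => ?_⟩
        have hYne : Y.Nonempty := card_pos.mp (by omega)
        set a₀ := Y.min' hYne with ha₀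
        have ha₀Y : a₀ ∈ Y := Y.min'_mem hYne
        have hY' : T tM ≤ (Y.erase a₀).card := by
          rw [card_erase_of_mem ha₀Y]; omega
        obtain ⟨W, hWY', hWcard, b₀, hW⟩ := hT tM (fun w => f (Fin.cons a₀ w)) (Y.erase a₀) hY'
        obtain ⟨Z', hZ'W, hZ'card, c', hc'⟩ := hM f W (by rw [hWcard])
        have hZ'Y' : Z' ⊆ Y.erase a₀ := hZ'W.trans hWY'
        have ha₀Z' : a₀ ∉ Z' := fun h => (mem_erase.mp (hZ'Y' h)).1 rfl
        refine ⟨insert a₀ Z', ?_, ?_, fun x => if x = a₀ then b₀ else c' x, ?_⟩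
        · exact insert_subset ha₀Y (hZ'Y'.trans (erase_subset _ _))
        · rw [card_insert_of_notMem ha₀Z', hZ'card]
        · intro v hv hvZ
          have hmin : ∀ l, a₀ ≤ v l := by
            intro l
            have : v l ∈ Y := (insert_subset ha₀Y (hZ'Y'.trans (erase_subset _ _))) (hvZ l)
            exact Y.min'_le _ this
          by_cases h0 : v 0 = a₀
          · have htail : ∀ l : Fin k, v l.succ ∈ Z' := by
              intro l
              rcases mem_insert.mp (hvZ l.succ) with h | h
              · exact absurd (h.trans h0.symm) (ne_of_gt (hv (Fin.succ_pos l)))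
              · exact h
            have hveq : v = Fin.cons a₀ (fun l => v l.succ) := by
              funext l
              refine Fin.cases ?_ ?_ l
              · simp [h0]
              · intro j; simp
            rw [hveq, hW (fun l => v l.succ)
              (fun a b hab => hv (by simpa [Fin.succ_lt_succ_iff] using hab))
              (fun l => hZ'W (htail l))]
            simp [h0]
          · have hall : ∀ l, v l ∈ Z' := by
              intro l
              rcases mem_insert.mp (hvZ l) with h | h
              · exfalso
                have h1 : a₀ < v 0 := lt_of_le_of_ne (hmin 0) (Ne.symm h0)
                have h2 : v 0 ≤ v l := hv.monotone (Fin.zero_le l)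
                omega
              · exact h
            rw [hc' v hv hall]; simp [h0]
    intro n
    obtain ⟨t, hEH⟩ := EH (Fintype.card α * n + 1)
    refine ⟨t, fun f Y hY => ?_⟩
    obtain ⟨Z, hZY, hZcard, c, hc⟩ := hEH f Y hY
    have hmaps : ∀ x ∈ Z, c x ∈ (univ : Finset α) := fun x _ => mem_univ _
    have hlt : (univ : Finset α).card * n < Z.card := by
      rw [card_univ, hZcard]; omega
    obtain ⟨b, _, hb⟩ := exists_lt_card_fiber_of_mul_lt_card_of_maps_to hmaps hlt
    obtain ⟨Z'', hZ''f, hZ''card⟩ := exists_subset_card_eq (le_of_lt hb)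
    have hZ''Z : Z'' ⊆ Z := hZ''f.trans (filter_subset _ _)
    refine ⟨Z'', hZ''Z.trans hZY, hZ''card, b, fun v hv hvZ => ?_⟩
    rw [hc v hv (fun l => hZ''Z (hvZ l))]
    exact (mem_filter.mp (hZ''f (hvZ 0))).2

theorem sm4 {a b c d : ℕ} (h1 : a < b) (h2 : b < c) (h3 : c < d) :
    StrictMono ![a,b,c,d] := by
  intro i j hij
  fin_cases i <;> fin_cases j <;> simp_all [Fin.lt_def] <;> omega

theorem mem4 {Z : Finset ℕ} {a b c d : ℕ} (ha : a ∈ Z) (hb : b ∈ Z) (hc : c ∈ Z)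
    (hd : d ∈ Z) : ∀ l : Fin 4, ![a,b,c,d] l ∈ Z := by
  intro l; fin_cases l <;> simpa

theorem gridRamsey (α : Type) [Fintype α] [DecidableEq α] (n : ℕ) :
    ∃ t : ℕ, ∀ c : ℕ → ℕ → ℕ → ℕ → α, ∃ (u v : Fin n → ℕ) (b : α),
      StrictMono u ∧ StrictMono v ∧ (∀ i, u i < t) ∧ (∀ i, v i < t) ∧
      ∀ p p' q q' : Fin n, p < p' → q < q' → c (u p) (u p') (v q) (v q') = b := by
  obtain ⟨t, ht⟩ := ramseyT α 4 (n + n)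
  refine ⟨t, fun c => ?_⟩
  obtain ⟨Z, hZY, hZcard, b, hb⟩ := ht (fun w => c (w 0) (w 1) (w 2) (w 3))
    (range t) (by simp)
  have e := Z.orderIsoOfFin hZcard
  let g : Fin (n + n) → ℕ := fun i => ((Z.orderIsoOfFin hZcard) i : ℕ)
  have hgmono : ∀ a b : Fin (n + n), a < b → g a < g b := by
    intro a b h
    exact Subtype.coe_lt_coe.mpr ((Z.orderIsoOfFin hZcard).strictMono h)
  have hgZ : ∀ i, g i ∈ Z := fun i => ((Z.orderIsoOfFin hZcard) i).2
  have hglt : ∀ i, g i < t := fun i => mem_range.mp (hZY (hgZ i))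
  let u : Fin n → ℕ := fun p => g ⟨p.1, by omega⟩
  let v : Fin n → ℕ := fun q => g ⟨n + q.1, by omega⟩
  have hu : StrictMono u := by
    intro p p' h
    exact hgmono _ _ (Fin.mk_lt_mk.mpr (Fin.lt_def.mp h))
  have hv : StrictMono v := by
    intro q q' h
    refine hgmono _ _ (Fin.mk_lt_mk.mpr ?_)
    have := Fin.lt_def.mp h; omega
  refine ⟨u, v, b, hu, hv, fun i => hglt _, fun i => hglt _, ?_⟩
  intro p p' q q' hp hq
  have h1 : u p < u p' := hu hp
  have h2 : u p' < v q := by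
    refine hgmono _ _ (Fin.mk_lt_mk.mpr ?_)
    have := p'.2; omega
  have h3 : v q < v q' := hv hq
  have := hb ![u p, u p', v q, v q'] (sm4 h1 h2 h3)
    (mem4 (hgZ _) (hgZ _) (hgZ _) (hgZ _))
  simpa using this

/-- normalize a pair of booleans: equal pairs become `(false, false)`. -/
def nbb (a a' : Bool) : Bool × Bool := if a = a' then (false, false) else (a, a')

/-- canonical pattern of an ordered pair. -/
def cpr {γ : Type*} [LinearOrder γ] (x y : γ) : Bool × Bool :=
  if x < y then (false, true) else if y < x then (true, false) else (false, false)

theorem transfer_core {γ : Type*} {m n : ℕ} (W : Fin m → Fin n → Fin n → γ)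
    (z0 z1 z2 : Fin n) (h01 : z0 < z1) (h12 : z1 < z2)
    (hToE : ∀ (i j : Fin m) (a b a' b' : Bool) (lo hi lo2 hi2 : Fin n), lo < hi → lo2 < hi2 →
      ((W i (cond a hi lo) (cond b hi2 lo2) = W j (cond a' hi lo) (cond b' hi2 lo2)) ↔
       (W i (cond a z1 z0) (cond b z1 z0) = W j (cond a' z1 z0) (cond b' z1 z0))))
    (i j : Fin m) (p₁ p₂ q₁ q₂ P₁ P₂ Q₁ Q₂ : Fin n)
    (hr1 : p₁ < p₂ ↔ P₁ < P₂) (hr2 : p₂ < p₁ ↔ P₂ < P₁)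
    (hc1 : q₁ < q₂ ↔ Q₁ < Q₂) (hc2 : q₂ < q₁ ↔ Q₂ < Q₁) :
    (W i p₁ q₁ = W j p₂ q₂) ↔ (W i P₁ Q₁ = W j P₂ Q₂) := by
  have hdec : ∀ x y : Fin n, ∃ (lo hi : Fin n) (a a' : Bool), lo < hi ∧
      cond a hi lo = x ∧ cond a' hi lo = y ∧ nbb a a' = cpr x y := by
    intro x y
    rcases lt_trichotomy x y with h | h | h
    · exact ⟨x, y, false, true, h, rfl, rfl, by simp [nbb, cpr, h]⟩
    · subst h
      rcases lt_or_ge z0 x with h0 | h0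
      · exact ⟨z0, x, true, true, h0, rfl, rfl, by simp [nbb, cpr]⟩
      · exact ⟨x, z1, false, false, lt_of_le_of_lt h0 h01, rfl, rfl, by simp [nbb, cpr]⟩
    · exact ⟨y, x, true, false, h, rfl, rfl, by simp [nbb, cpr, h, lt_asymm h]⟩
  have hBr1 : ∀ (i j : Fin m) (b b' : Bool),
      (W i z1 (cond b z1 z0) = W j z1 (cond b' z1 z0)) ↔
      (W i z0 (cond b z1 z0) = W j z0 (cond b' z1 z0)) := by
    intro i j b b'
    exact hToE i j false b false b' z1 z2 z0 z1 h12 h01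
  have hBr2 : ∀ (i j : Fin m) (a a' : Bool),
      (W i (cond a z1 z0) z1 = W j (cond a' z1 z0) z1) ↔
      (W i (cond a z1 z0) z0 = W j (cond a' z1 z0) z0) := by
    intro i j a a'
    exact hToE i j a false a' false z0 z1 z1 z2 h01 h12
  have hNorm : ∀ (i j : Fin m) (a b a' b' : Bool),
      (W i (cond a z1 z0) (cond b z1 z0) = W j (cond a' z1 z0) (cond b' z1 z0)) ↔
      (W i (cond (nbb a a').1 z1 z0) (cond (nbb b b').1 z1 z0) =
       W j (cond (nbb a a').2 z1 z0) (cond (nbb b b').2 z1 z0)) := by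
    intro i j a b a' b'
    cases a <;> cases a' <;> cases b <;> cases b'
    · exact Iff.rfl
    · exact Iff.rfl
    · exact Iff.rfl
    · exact hBr2 i j false false
    · exact Iff.rfl
    · exact Iff.rfl
    · exact Iff.rfl
    · exact hBr2 i j false true
    · exact Iff.rfl
    · exact Iff.rfl
    · exact Iff.rfl
    · exact hBr2 i j true false
    · exact hBr1 i j false false
    · exact hBr1 i j false true
    · exact hBr1 i j true false
    · exact (hBr1 i j true true).trans (hBr2 i j false false)
  have hCanon : ∀ (i j : Fin m) (x₁ x₂ y₁ y₂ : Fin n),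
      (W i x₁ y₁ = W j x₂ y₂) ↔
      (W i (cond (cpr x₁ x₂).1 z1 z0) (cond (cpr y₁ y₂).1 z1 z0) =
       W j (cond (cpr x₁ x₂).2 z1 z0) (cond (cpr y₁ y₂).2 z1 z0)) := by
    intro i j x₁ x₂ y₁ y₂
    obtain ⟨lo, hi, a, a', hlh, hx₁, hx₂, hs⟩ := hdec x₁ x₂
    obtain ⟨lo2, hi2, b, b', hlh2, hy₁, hy₂, hs2⟩ := hdec y₁ y₂
    rw [← hs, ← hs2, ← hx₁, ← hx₂, ← hy₁, ← hy₂]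
    exact (hToE i j a b a' b' lo hi lo2 hi2 hlh hlh2).trans (hNorm i j a b a' b')
  have hcp1 : cpr p₁ p₂ = cpr P₁ P₂ := by
    simp only [cpr, hr1, hr2]
  have hcp2 : cpr q₁ q₂ = cpr Q₁ Q₂ := by
    simp only [cpr, hc1, hc2]
  refine (hCanon i j p₁ p₂ q₁ q₂).trans ?_
  rw [hcp1, hcp2]
  exact (hCanon i j P₁ P₂ Q₁ Q₂).symm

theorem endgame {γ : Type*} {m n : ℕ} (W : Fin m → Fin n → Fin n → γ)
    (z0 z1 z2 : Fin n) (h01 : z0 < z1) (h12 : z1 < z2)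
    (hT : ∀ (i j : Fin m) (p₁ p₂ q₁ q₂ P₁ P₂ Q₁ Q₂ : Fin n),
      (p₁ < p₂ ↔ P₁ < P₂) → (p₂ < p₁ ↔ P₂ < P₁) →
      (q₁ < q₂ ↔ Q₁ < Q₂) → (q₂ < q₁ ↔ Q₂ < Q₁) →
      ((W i p₁ q₁ = W j p₂ q₂) ↔ (W i P₁ Q₁ = W j P₂ Q₂)))
    (hne : ∀ i j : Fin m, i ≠ j → ∀ p q, W i p q ≠ W j p q) :
    (∃ i, ∀ p q p' q', W i p q = W i p' q' → p = p' ∧ q = q') ∨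
    ((∀ i j, i ≠ j → ∀ p q p' q', W i p q ≠ W j p' q') ∧
     ∀ i, (∀ p q p' q', W i p q = W i p' q') ∨
          (∀ p q p' q', W i p q = W i p' q' ↔ p = p') ∨
          (∀ p q p' q', W i p q = W i p' q' ↔ q = q')) := by
  have h02 : z0 < z2 := h01.trans h12
  have nf : ∀ x : Fin n, ¬ x < x := fun x => lt_irrefl x
  -- extension of "A" (column-blind on the base pair) to everywhere
  have hAeq : ∀ i : Fin m, W i z0 z0 = W i z0 z1 → ∀ p q q' : Fin n, W i p q = W i p q' := by
    intro i hA p q q'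
    rcases lt_trichotomy q q' with h | h | h
    · exact (hT i i z0 z0 z0 z1 p p q q'
        (iff_of_false (nf _) (nf _)) (iff_of_false (nf _) (nf _))
        (iff_of_true h01 h) (iff_of_false (lt_asymm h01) (lt_asymm h))).mp hA
    · rw [h]
    · exact ((hT i i z0 z0 z0 z1 p p q' q
        (iff_of_false (nf _) (nf _)) (iff_of_false (nf _) (nf _))
        (iff_of_true h01 h) (iff_of_false (lt_asymm h01) (lt_asymm h))).mp hA).symm
  have hBeq : ∀ i : Fin m, W i z0 z0 = W i z1 z0 → ∀ p p' q : Fin n, W i p q = W i p' q := by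
    intro i hB p p' q
    rcases lt_trichotomy p p' with h | h | h
    · exact (hT i i z0 z1 z0 z0 p p' q q
        (iff_of_true h01 h) (iff_of_false (lt_asymm h01) (lt_asymm h))
        (iff_of_false (nf _) (nf _)) (iff_of_false (nf _) (nf _))).mp hB
    · rw [h]
    · exact ((hT i i z0 z1 z0 z0 p' p q q
        (iff_of_true h01 h) (iff_of_false (lt_asymm h01) (lt_asymm h))
        (iff_of_false (nf _) (nf _)) (iff_of_false (nf _) (nf _))).mp hB).symm
  -- diagonal equality implies A
  have hCA : ∀ i : Fin m, W i z0 z0 = W i z1 z1 → W i z0 z0 = W i z0 z1 := by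
    intro i h
    have h2 : W i z0 z0 = W i z1 z2 := (hT i i z0 z1 z0 z1 z0 z1 z0 z2
      Iff.rfl Iff.rfl (iff_of_true h01 h02) (iff_of_false (lt_asymm h01) (lt_asymm h02))).mp h
    have h3 : W i z1 z1 = W i z1 z2 := h.symm.trans h2
    exact (hT i i z1 z1 z1 z2 z0 z0 z0 z1
      (iff_of_false (nf _) (nf _)) (iff_of_false (nf _) (nf _))
      (iff_of_true h12 h01) (iff_of_false (lt_asymm h12) (lt_asymm h01))).mp h3
  -- anti-diagonal equality implies A
  have hDA : ∀ i : Fin m, W i z0 z1 = W i z1 z0 → W i z0 z0 = W i z0 z1 := by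
    intro i h
    have h2 : W i z0 z2 = W i z1 z0 := (hT i i z0 z1 z1 z0 z0 z1 z2 z0
      Iff.rfl Iff.rfl (iff_of_false (lt_asymm h01) (lt_asymm h02)) (iff_of_true h01 h02)).mp h
    have h3 : W i z0 z1 = W i z0 z2 := h.trans h2.symm
    exact (hT i i z0 z0 z1 z2 z0 z0 z0 z1
      (iff_of_false (nf _) (nf _)) (iff_of_false (nf _) (nf _))
      (iff_of_true h12 h01) (iff_of_false (lt_asymm h12) (lt_asymm h01))).mp h3
  -- killer lemmas for cross equalities
  have k1 : ∀ i j : Fin m, i ≠ j → ∀ p q q' : Fin n, q < q' → W i p q ≠ W j p q' := by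
    intro i j hij p q q' hq h
    have h1 : W i z0 z0 = W j z0 z1 := (hT i j p p q q' z0 z0 z0 z1
      (iff_of_false (nf _) (nf _)) (iff_of_false (nf _) (nf _))
      (iff_of_true hq h01) (iff_of_false (lt_asymm hq) (lt_asymm h01))).mp h
    have h2 : W i z0 z0 = W j z0 z2 := (hT i j p p q q' z0 z0 z0 z2
      (iff_of_false (nf _) (nf _)) (iff_of_false (nf _) (nf _))
      (iff_of_true hq h02) (iff_of_false (lt_asymm hq) (lt_asymm h02))).mp h
    have h4 : W j z0 z0 = W j z0 z1 := (hT j j z0 z0 z1 z2 z0 z0 z0 z1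
      (iff_of_false (nf _) (nf _)) (iff_of_false (nf _) (nf _))
      (iff_of_true h12 h01) (iff_of_false (lt_asymm h12) (lt_asymm h01))).mp (h1.symm.trans h2)
    exact hne i j hij z0 z0 (h1.trans h4.symm)
  have k2 : ∀ i j : Fin m, i ≠ j → ∀ p p' q : Fin n, p < p' → W i p q ≠ W j p' q := by
    intro i j hij p p' q hp h
    have h1 : W i z0 z0 = W j z1 z0 := (hT i j p p' q q z0 z1 z0 z0
      (iff_of_true hp h01) (iff_of_false (lt_asymm hp) (lt_asymm h01))
      (iff_of_false (nf _) (nf _)) (iff_of_false (nf _) (nf _))).mp h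
    have h2 : W i z0 z0 = W j z2 z0 := (hT i j p p' q q z0 z2 z0 z0
      (iff_of_true hp h02) (iff_of_false (lt_asymm hp) (lt_asymm h02))
      (iff_of_false (nf _) (nf _)) (iff_of_false (nf _) (nf _))).mp h
    have h4 : W j z0 z0 = W j z1 z0 := (hT j j z1 z2 z0 z0 z0 z1 z0 z0
      (iff_of_true h12 h01) (iff_of_false (lt_asymm h12) (lt_asymm h01))
      (iff_of_false (nf _) (nf _)) (iff_of_false (nf _) (nf _))).mp (h1.symm.trans h2)
    exact hne i j hij z0 z0 (h1.trans h4.symm)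
  have k3 : ∀ i j : Fin m, i ≠ j → ∀ p p' q q' : Fin n, p < p' → q < q' →
      W i p q ≠ W j p' q' := by
    intro i j hij p p' q q' hp hq h
    have h1 : W i z0 z0 = W j z1 z1 := (hT i j p p' q q' z0 z1 z0 z1
      (iff_of_true hp h01) (iff_of_false (lt_asymm hp) (lt_asymm h01))
      (iff_of_true hq h01) (iff_of_false (lt_asymm hq) (lt_asymm h01))).mp h
    have h2 : W i z0 z0 = W j z2 z2 := (hT i j p p' q q' z0 z2 z0 z2
      (iff_of_true hp h02) (iff_of_false (lt_asymm hp) (lt_asymm h02))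
      (iff_of_true hq h02) (iff_of_false (lt_asymm hq) (lt_asymm h02))).mp h
    have h4 : W j z0 z0 = W j z1 z1 := (hT j j z1 z2 z1 z2 z0 z1 z0 z1
      (iff_of_true h12 h01) (iff_of_false (lt_asymm h12) (lt_asymm h01))
      (iff_of_true h12 h01) (iff_of_false (lt_asymm h12) (lt_asymm h01))).mp (h1.symm.trans h2)
    exact hne i j hij z0 z0 (h1.trans h4.symm)
  have k4 : ∀ i j : Fin m, i ≠ j → ∀ p p' q q' : Fin n, p < p' → q' < q →
      W i p q ≠ W j p' q' := by
    intro i j hij p p' q q' hp hq h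
    have h1 : W i z0 z1 = W j z1 z0 := (hT i j p p' q q' z0 z1 z1 z0
      (iff_of_true hp h01) (iff_of_false (lt_asymm hp) (lt_asymm h01))
      (iff_of_false (lt_asymm hq) (lt_asymm h01)) (iff_of_true hq h01)).mp h
    have h2 : W i z0 z2 = W j z1 z0 := (hT i j p p' q q' z0 z1 z2 z0
      (iff_of_true hp h01) (iff_of_false (lt_asymm hp) (lt_asymm h01))
      (iff_of_false (lt_asymm hq) (lt_asymm h02)) (iff_of_true hq h02)).mp h
    have h3 : W i z0 z1 = W i z0 z2 := h1.trans h2.symm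
    have h4 : W i z0 z0 = W i z0 z1 := (hT i i z0 z0 z1 z2 z0 z0 z0 z1
      (iff_of_false (nf _) (nf _)) (iff_of_false (nf _) (nf _))
      (iff_of_true h12 h01) (iff_of_false (lt_asymm h12) (lt_asymm h01))).mp h3
    exact k2 i j hij z0 z1 z0 h01 (h4.trans h1)
  have hCross : ∀ i j : Fin m, i ≠ j → ∀ p q p' q' : Fin n, W i p q ≠ W j p' q' := by
    intro i j hij p q p' q' h
    rcases lt_trichotomy p p' with hp | hp | hp
    · rcases lt_trichotomy q q' with hq | hq | hq
      · exact k3 i j hij p p' q q' hp hq h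
      · subst hq; exact k2 i j hij p p' q hp h
      · exact k4 i j hij p p' q q' hp hq h
    · subst hp
      rcases lt_trichotomy q q' with hq | hq | hq
      · exact k1 i j hij p q q' hq h
      · subst hq; exact hne i j hij p q h
      · exact k1 j i (Ne.symm hij) p q' q hq h.symm
    · rcases lt_trichotomy q q' with hq | hq | hq
      · exact k4 j i (Ne.symm hij) p' p q' q hp hq h.symm
      · subst hq; exact k2 j i (Ne.symm hij) p' p q hp h.symm
      · exact k3 j i (Ne.symm hij) p' p q' q hp hq h.symm
  by_cases hex : ∃ i : Fin m, ¬(W i z0 z0 = W i z0 z1) ∧ ¬(W i z0 z0 = W i z1 z0)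
  · obtain ⟨i, hnA, hnB⟩ := hex
    left
    refine ⟨i, ?_⟩
    have rb1 : ∀ p q q' : Fin n, q < q' → W i p q ≠ W i p q' := by
      intro p q q' hq h
      exact hnA ((hT i i p p q q' z0 z0 z0 z1
        (iff_of_false (nf _) (nf _)) (iff_of_false (nf _) (nf _))
        (iff_of_true hq h01) (iff_of_false (lt_asymm hq) (lt_asymm h01))).mp h)
    have rb2 : ∀ p p' q : Fin n, p < p' → W i p q ≠ W i p' q := by
      intro p p' q hp h
      exact hnB ((hT i i p p' q q z0 z1 z0 z0
        (iff_of_true hp h01) (iff_of_false (lt_asymm hp) (lt_asymm h01))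
        (iff_of_false (nf _) (nf _)) (iff_of_false (nf _) (nf _))).mp h)
    have rb3 : ∀ p p' q q' : Fin n, p < p' → q < q' → W i p q ≠ W i p' q' := by
      intro p p' q q' hp hq h
      exact hnA (hCA i ((hT i i p p' q q' z0 z1 z0 z1
        (iff_of_true hp h01) (iff_of_false (lt_asymm hp) (lt_asymm h01))
        (iff_of_true hq h01) (iff_of_false (lt_asymm hq) (lt_asymm h01))).mp h))
    have rb4 : ∀ p p' q q' : Fin n, p < p' → q' < q → W i p q ≠ W i p' q' := by
      intro p p' q q' hp hq h
      exact hnA (hDA i ((hT i i p p' q q' z0 z1 z1 z0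
        (iff_of_true hp h01) (iff_of_false (lt_asymm hp) (lt_asymm h01))
        (iff_of_false (lt_asymm hq) (lt_asymm h01)) (iff_of_true hq h01)).mp h))
    intro p q p' q' h
    rcases lt_trichotomy p p' with hp | hp | hp
    · rcases lt_trichotomy q q' with hq | hq | hq
      · exact absurd h (rb3 p p' q q' hp hq)
      · rw [← hq] at h; exact absurd h (rb2 p p' q hp)
      · exact absurd h (rb4 p p' q q' hp hq)
    · rcases lt_trichotomy q q' with hq | hq | hq
      · rw [← hp] at h; exact absurd h (rb1 p q q' hq)
      · exact ⟨hp, hq⟩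
      · rw [← hp] at h; exact absurd h.symm (rb1 p q' q hq)
    · rcases lt_trichotomy q q' with hq | hq | hq
      · exact absurd h.symm (rb4 p' p q' q hp hq)
      · rw [hq] at h; exact absurd h.symm (rb2 p' p q' hp)
      · exact absurd h.symm (rb3 p' p q' q hp hq)
  · right
    have hAB : ∀ i : Fin m, (W i z0 z0 = W i z0 z1) ∨ (W i z0 z0 = W i z1 z0) := by
      intro i
      by_contra hc
      push_neg at hc
      exact hex ⟨i, hc.1, hc.2⟩
    refine ⟨hCross, fun i => ?_⟩
    by_cases hA : W i z0 z0 = W i z0 z1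
    · by_cases hB : W i z0 z0 = W i z1 z0
      · exact Or.inl (fun p q p' q' => (hAeq i hA p q q').trans (hBeq i hB p p' q'))
      · have nB' : ∀ a a' b : Fin n, a < a' → W i a b ≠ W i a' b := by
          intro a a' b hlt hh
          exact hB ((hT i i a a' b b z0 z1 z0 z0
            (iff_of_true hlt h01) (iff_of_false (lt_asymm hlt) (lt_asymm h01))
            (iff_of_false (nf _) (nf _)) (iff_of_false (nf _) (nf _))).mp hh)
        refine Or.inr (Or.inl (fun p q p' q' => ⟨?_, ?_⟩))
        · intro h
          rcases lt_trichotomy p p' with hp | hp | hp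
          · exact absurd ((hAeq i hA p q' q).trans h) (nB' p p' q' hp)
          · exact hp
          · exact absurd ((hAeq i hA p' q q').trans h.symm) (nB' p' p q hp)
        · intro h
          subst h
          exact hAeq i hA p q q'
    · have hB := (hAB i).resolve_left hA
      have nA' : ∀ a b b' : Fin n, b < b' → W i a b ≠ W i a b' := by
        intro a b b' hlt hh
        exact hA ((hT i i a a b b' z0 z0 z0 z1
          (iff_of_false (nf _) (nf _)) (iff_of_false (nf _) (nf _))
          (iff_of_true hlt h01) (iff_of_false (lt_asymm hlt) (lt_asymm h01))).mp hh)
      refine Or.inr (Or.inr (fun p q p' q' => ⟨?_, ?_⟩))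
      · intro h
        rcases lt_trichotomy q q' with hq | hq | hq
        · exact absurd ((hBeq i hB p p' q).symm.trans h) (nA' p' q q' hq)
        · exact hq
        · exact absurd (h.trans (hBeq i hB p' p q')) ((fun hh => nA' p q' q hq hh.symm))
      · intro h
        subst h
        exact hBeq i hB p p' q

end RamseyAux

/-- A triple system (3-graph): every edge has exactly 3 vertices. -/
def IsTripleSystem {V : Type*} (H : Finset (Finset V)) : Prop :=
  ∀ e ∈ H, e.card = 3

/-- A list-edge-coloring (with respect to the host triple system `H`) of the complete
bipartite graph with parts `X` and `Y` contained in the shadow `∂H`: each edge `xy`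
gets a color `χ x y` from its list `L(xy) = N_H(xy) \ (X ∪ Y)`, i.e. `{x, y, χ x y} ∈ H`
and `χ x y` lies outside the vertex set `X ∪ Y` of the bipartite graph. -/
def IsListColoring {V : Type*} [DecidableEq V] (H : Finset (Finset V))
    (X Y : Finset V) (χ : V → V → V) : Prop :=
  ∀ x ∈ X, ∀ y ∈ Y, ({x, y, χ x y} : Finset V) ∈ H ∧ χ x y ∉ X ∧ χ x y ∉ Y

/-- An `m`-multicoloring of the complete bipartite graph with parts `X`, `Y` with respect
to `H`: a family of `m` list-edge-colorings assigning each edge `m` pairwise distinct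
colors from its list. -/
def IsMulticoloring {V : Type*} [DecidableEq V] {m : ℕ} (H : Finset (Finset V))
    (X Y : Finset V) (χ : Fin m → V → V → V) : Prop :=
  (∀ i, IsListColoring H X Y (χ i)) ∧
    ∀ i j, i ≠ j → ∀ x ∈ X, ∀ y ∈ Y, χ i x y ≠ χ j x y

/-- Monochromatic: all edges get the same color. -/
def MonochromaticOn {α β C : Type*} (χ : α → β → C) (X : Finset α) (Y : Finset β) : Prop :=
  ∀ x ∈ X, ∀ y ∈ Y, ∀ x' ∈ X, ∀ y' ∈ Y, χ x y = χ x' y'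

/-- Rainbow: all edges get pairwise distinct colors. -/
def RainbowOn {α β C : Type*} (χ : α → β → C) (X : Finset α) (Y : Finset β) : Prop :=
  ∀ x ∈ X, ∀ y ∈ Y, ∀ x' ∈ X, ∀ y' ∈ Y, χ x y = χ x' y' → x = x' ∧ y = y'

/-- `X`-canonical: two edges get equal colors iff they have the same endpoint in `X`. -/
def XCanonicalOn {α β C : Type*} (χ : α → β → C) (X : Finset α) (Y : Finset β) : Prop :=
  ∀ x ∈ X, ∀ y ∈ Y, ∀ x' ∈ X, ∀ y' ∈ Y, (χ x y = χ x' y' ↔ x = x')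

/-- `Y`-canonical: two edges get equal colors iff they have the same endpoint in `Y`. -/
def YCanonicalOn {α β C : Type*} (χ : α → β → C) (X : Finset α) (Y : Finset β) : Prop :=
  ∀ x ∈ X, ∀ y ∈ Y, ∀ x' ∈ X, ∀ y' ∈ Y, (χ x y = χ x' y' ↔ y = y')

/-- For all `m, s ≥ 1` there is `t` such that: if `H` is a triple system, `G = K_{t,t}`
(with parts `X`, `Y`) is contained in the shadow `∂H`, and `G` has an `m`-multicoloring
with respect to `H`, then there are parts `X' ⊆ X`, `Y' ⊆ Y` of size `s` spanning a copy
`F` of `K_{s,s}` which has either a rainbow list-edge-coloring, or an `m`-multicoloring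
`χ₁, …, χ_m` which are pairwise disjoint (`χ i x y ≠ χ j x' y'` for `i ≠ j`) and each of
which is monochromatic or canonical on `F`. -/
theorem multicoloring_canonical_ramsey.{u} (m s : ℕ) (hm : 0 < m) (hs : 0 < s) :
    ∃ t : ℕ, ∀ (V : Type u) [DecidableEq V], ∀ H : Finset (Finset V),
      IsTripleSystem H →
      ∀ X Y : Finset V, Disjoint X Y → X.card = t → Y.card = t →
      (∀ x ∈ X, ∀ y ∈ Y, ∃ e ∈ H, ({x, y} : Finset V) ⊆ e) →
      (∃ χ : Fin m → V → V → V, IsMulticoloring H X Y χ) →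
      ∃ X' ⊆ X, ∃ Y' ⊆ Y, X'.card = s ∧ Y'.card = s ∧
        ((∃ ψ : V → V → V, IsListColoring H X' Y' ψ ∧ RainbowOn ψ X' Y') ∨
         (∃ χ : Fin m → V → V → V, IsMulticoloring H X' Y' χ ∧
           (∀ i j, i ≠ j → ∀ x ∈ X', ∀ y ∈ Y', ∀ x' ∈ X', ∀ y' ∈ Y',
             χ i x y ≠ χ j x' y') ∧
           ∀ i, MonochromaticOn (χ i) X' Y' ∨
             XCanonicalOn (χ i) X' Y' ∨ YCanonicalOn (χ i) X' Y')) := by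
  classical
  obtain ⟨tg, htg⟩ := gridRamsey ((Fin m × Bool × Bool) → (Fin m × Bool × Bool) → Bool) (s + 3)
  refine ⟨max tg 1, ?_⟩
  intro V _inst H _hH X Y _hdisj hXcard hYcard _hsh hχ
  obtain ⟨χ, hmc⟩ := hχ
  have hXpos : 0 < X.card := by rw [hXcard]; exact lt_of_lt_of_le one_pos (le_max_right tg 1)
  have hYpos : 0 < Y.card := by rw [hYcard]; exact lt_of_lt_of_le one_pos (le_max_right tg 1)
  obtain ⟨x₀, _hx₀⟩ := card_pos.mp hXpos
  obtain ⟨y₀, _hy₀⟩ := card_pos.mp hYpos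
  obtain ⟨Ex, hExX, hExinj⟩ : ∃ Ex : ℕ → V, (∀ p, p < X.card → Ex p ∈ X) ∧
      (∀ p q, p < X.card → q < X.card → Ex p = Ex q → p = q) := by
    refine ⟨fun p => if h : p < X.card then ((X.equivFin.symm ⟨p, h⟩ : {x // x ∈ X}) : V)
      else x₀, ?_, ?_⟩
    · intro p h
      simp only [dif_pos h]
      exact (X.equivFin.symm ⟨p, h⟩).2
    · intro p q hp hq hEq
      simp only [dif_pos hp, dif_pos hq] at hEq
      have h2 := X.equivFin.symm.injective (Subtype.coe_injective hEq)
      exact congrArg Fin.val h2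
  obtain ⟨Ey, hEyY, hEyinj⟩ : ∃ Ey : ℕ → V, (∀ p, p < Y.card → Ey p ∈ Y) ∧
      (∀ p q, p < Y.card → q < Y.card → Ey p = Ey q → p = q) := by
    refine ⟨fun p => if h : p < Y.card then ((Y.equivFin.symm ⟨p, h⟩ : {x // x ∈ Y}) : V)
      else y₀, ?_, ?_⟩
    · intro p h
      simp only [dif_pos h]
      exact (Y.equivFin.symm ⟨p, h⟩).2
    · intro p q hp hq hEq
      simp only [dif_pos hp, dif_pos hq] at hEq
      have h2 := Y.equivFin.symm.injective (Subtype.coe_injective hEq)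
      exact congrArg Fin.val h2
  obtain ⟨u, v, bc, hu, hv, hult, hvlt, hgrid⟩ := htg (fun p p' q q' z z' =>
    decide (χ z.1 (Ex (cond z.2.1 p' p)) (Ey (cond z.2.2 q' q)) =
            χ z'.1 (Ex (cond z'.2.1 p' p)) (Ey (cond z'.2.2 q' q))))
  have hup : ∀ p : Fin (s+3), u p < X.card := fun p =>
    lt_of_lt_of_le (hult p) (by rw [hXcard]; exact le_max_left tg 1)
  have hvq : ∀ q : Fin (s+3), v q < Y.card := fun q =>
    lt_of_lt_of_le (hvlt q) (by rw [hYcard]; exact le_max_left tg 1)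
  obtain ⟨z0, z1, z2, h01, h12⟩ : ∃ a b c : Fin (s+3), a < b ∧ b < c :=
    ⟨⟨0, by omega⟩, ⟨1, by omega⟩, ⟨2, by omega⟩, by simp [Fin.lt_def], by simp [Fin.lt_def]⟩
  have hcondu : ∀ (t : Bool) (x y : Fin (s+3)), cond t (u x) (u y) = u (cond t x y) := by
    intro t x y; cases t <;> rfl
  have hcondv : ∀ (t : Bool) (x y : Fin (s+3)), cond t (v x) (v y) = v (cond t x y) := by
    intro t x y; cases t <;> rfl
  have hToE : ∀ (i j : Fin m) (a b a' b' : Bool) (lo hi lo2 hi2 : Fin (s+3)),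
      lo < hi → lo2 < hi2 →
      ((χ i (Ex (u (cond a hi lo))) (Ey (v (cond b hi2 lo2))) =
        χ j (Ex (u (cond a' hi lo))) (Ey (v (cond b' hi2 lo2)))) ↔
       (χ i (Ex (u (cond a z1 z0))) (Ey (v (cond b z1 z0))) =
        χ j (Ex (u (cond a' z1 z0))) (Ey (v (cond b' z1 z0))))) := by
    intro i j a b a' b' lo hi lo2 hi2 hlh hlh2
    have h3 := (hgrid lo hi lo2 hi2 hlh hlh2).trans (hgrid z0 z1 z0 z1 h01 h01).symm
    have h4 := congrFun (congrFun h3 (i, a, b)) (j, a', b')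
    simp only [decide_eq_decide] at h4
    simpa only [hcondu, hcondv] using h4
  have hT := fun (i j : Fin m) (p₁ p₂ q₁ q₂ P₁ P₂ Q₁ Q₂ : Fin (s+3)) =>
    transfer_core (fun (i : Fin m) (p q : Fin (s+3)) => χ i (Ex (u p)) (Ey (v q)))
      z0 z1 z2 h01 h12 hToE i j p₁ p₂ q₁ q₂ P₁ P₂ Q₁ Q₂
  have hne : ∀ i j : Fin m, i ≠ j → ∀ p q : Fin (s+3),
      χ i (Ex (u p)) (Ey (v q)) ≠ χ j (Ex (u p)) (Ey (v q)) := fun i j hij p q =>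
    hmc.2 i j hij _ (hExX _ (hup p)) _ (hEyY _ (hvq q))
  have hEnd := endgame (fun (i : Fin m) (p q : Fin (s+3)) => χ i (Ex (u p)) (Ey (v q)))
    z0 z1 z2 h01 h12 hT hne
  have hcast : s ≤ s + 3 := by omega
  have hX'sub : (univ.image (fun p : Fin s => Ex (u (Fin.castLE hcast p)))) ⊆ X := by
    intro x hx
    obtain ⟨p, -, rfl⟩ := mem_image.mp hx
    exact hExX _ (hup _)
  have hY'sub : (univ.image (fun q : Fin s => Ey (v (Fin.castLE hcast q)))) ⊆ Y := by
    intro y hy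
    obtain ⟨q, -, rfl⟩ := mem_image.mp hy
    exact hEyY _ (hvq _)
  have hX'mem : ∀ x ∈ (univ.image (fun p : Fin s => Ex (u (Fin.castLE hcast p)))),
      ∃ p : Fin s, x = Ex (u (Fin.castLE hcast p)) := by
    intro x hx
    obtain ⟨p, -, h⟩ := mem_image.mp hx
    exact ⟨p, h.symm⟩
  have hY'mem : ∀ y ∈ (univ.image (fun q : Fin s => Ey (v (Fin.castLE hcast q)))),
      ∃ q : Fin s, y = Ey (v (Fin.castLE hcast q)) := by
    intro y hy
    obtain ⟨q, -, h⟩ := mem_image.mp hy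
    exact ⟨q, h.symm⟩
  have hXinj : Function.Injective (fun p : Fin s => Ex (u (Fin.castLE hcast p))) := by
    intro p q h
    have h2 : u (Fin.castLE hcast p) = u (Fin.castLE hcast q) :=
      hExinj _ _ (hup _) (hup _) h
    exact Fin.castLE_injective hcast (hu.injective h2)
  have hYinj : Function.Injective (fun q : Fin s => Ey (v (Fin.castLE hcast q))) := by
    intro p q h
    have h2 : v (Fin.castLE hcast p) = v (Fin.castLE hcast q) :=
      hEyinj _ _ (hvq _) (hvq _) h
    exact Fin.castLE_injective hcast (hv.injective h2)
  have hX'card : (univ.image (fun p : Fin s => Ex (u (Fin.castLE hcast p)))).card = s := by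
    rw [card_image_of_injective _ hXinj]; simp
  have hY'card : (univ.image (fun q : Fin s => Ey (v (Fin.castLE hcast q)))).card = s := by
    rw [card_image_of_injective _ hYinj]; simp
  have hLC : ∀ i : Fin m, IsListColoring H
      (univ.image (fun p : Fin s => Ex (u (Fin.castLE hcast p))))
      (univ.image (fun q : Fin s => Ey (v (Fin.castLE hcast q)))) (χ i) := by
    intro i x hx y hy
    obtain ⟨e1, e2, e3⟩ := hmc.1 i x (hX'sub hx) y (hY'sub hy)
    exact ⟨e1, fun hc => e2 (hX'sub hc), fun hc => e3 (hY'sub hc)⟩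
  refine ⟨_, hX'sub, _, hY'sub, hX'card, hY'card, ?_⟩
  rcases hEnd with ⟨i, hrb⟩ | ⟨hcross, hclass⟩
  · refine Or.inl ⟨χ i, hLC i, ?_⟩
    intro x hx y hy x' hx' y' hy' heq
    obtain ⟨p, rfl⟩ := hX'mem x hx
    obtain ⟨q, rfl⟩ := hY'mem y hy
    obtain ⟨p', rfl⟩ := hX'mem x' hx'
    obtain ⟨q', rfl⟩ := hY'mem y' hy'
    obtain ⟨hpp, hqq⟩ := hrb (Fin.castLE hcast p) (Fin.castLE hcast q)
      (Fin.castLE hcast p') (Fin.castLE hcast q') heq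
    exact ⟨congrArg (fun z => Ex (u z)) hpp, congrArg (fun z => Ey (v z)) hqq⟩
  · refine Or.inr ⟨χ, ⟨fun i => hLC i, fun i j hij x hx y hy =>
      hmc.2 i j hij x (hX'sub hx) y (hY'sub hy)⟩, ?_, ?_⟩
    · intro i j hij x hx y hy x' hx' y' hy'
      obtain ⟨p, rfl⟩ := hX'mem x hx
      obtain ⟨q, rfl⟩ := hY'mem y hy
      obtain ⟨p', rfl⟩ := hX'mem x' hx'
      obtain ⟨q', rfl⟩ := hY'mem y' hy'
      exact hcross i j hij (Fin.castLE hcast p) (Fin.castLE hcast q)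
        (Fin.castLE hcast p') (Fin.castLE hcast q')
    · intro i
      rcases hclass i with hmono | hxc | hyc
      · left
        intro x hx y hy x' hx' y' hy'
        obtain ⟨p, rfl⟩ := hX'mem x hx
        obtain ⟨q, rfl⟩ := hY'mem y hy
        obtain ⟨p', rfl⟩ := hX'mem x' hx'
        obtain ⟨q', rfl⟩ := hY'mem y' hy'
        exact hmono (Fin.castLE hcast p) (Fin.castLE hcast q)
          (Fin.castLE hcast p') (Fin.castLE hcast q')
      · right; left
        intro x hx y hy x' hx' y' hy'
        obtain ⟨p, rfl⟩ := hX'mem x hx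
        obtain ⟨q, rfl⟩ := hY'mem y hy
        obtain ⟨p', rfl⟩ := hX'mem x' hx'
        obtain ⟨q', rfl⟩ := hY'mem y' hy'
        constructor
        · intro heq
          exact congrArg (fun z => Ex (u z)) ((hxc (Fin.castLE hcast p) (Fin.castLE hcast q)
            (Fin.castLE hcast p') (Fin.castLE hcast q')).mp heq)
        · intro hxeq
          have hpe : Fin.castLE hcast p = Fin.castLE hcast p' :=
            hu.injective (hExinj _ _ (hup _) (hup _) hxeq)
          exact (hxc (Fin.castLE hcast p) (Fin.castLE hcast q)
            (Fin.castLE hcast p') (Fin.castLE hcast q')).mpr hpe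
      · right; right
        intro x hx y hy x' hx' y' hy'
        obtain ⟨p, rfl⟩ := hX'mem x hx
        obtain ⟨q, rfl⟩ := hY'mem y hy
        obtain ⟨p', rfl⟩ := hX'mem x' hx'
        obtain ⟨q', rfl⟩ := hY'mem y' hy'
        constructor
        · intro heq
          exact congrArg (fun z => Ey (v z)) ((hyc (Fin.castLE hcast p) (Fin.castLE hcast q)
            (Fin.castLE hcast p') (Fin.castLE hcast q')).mp heq)
        · intro hyeq
          have hqe : Fin.castLE hcast q = Fin.castLE hcast q' :=
            hv.injective (hEyinj _ _ (hvq _) (hvq _) hyeq)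
          exact (hyc (Fin.castLE hcast p) (Fin.castLE hcast q)
            (Fin.castLE hcast p') (Fin.castLE hcast q')).mpr hqe
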